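/- arXiv:1510.04093 — 2 statements merged into one kernel-verified Lean document; each statement's English description precedes it below -/
import Mathlib

section
/- Let A = {|a_i⟩} and B = {|b_j⟩} be orthonormal bases of ℂ^d. For every index k, the density matrix ρ = |b_k⟩⟨b_k| satisfies 1 − F(p_ρ^B, q_ρ^{A→B})² = 1 − Σ_{i=1}^d |⟨a_i|b_k⟩|⁴; consequently Q_F(A→B) ≥ max_{1≤k≤d} (1 − Σ_{i=1}^d |⟨a_i|b_k⟩|⁴). -/
open Matrix
open scoped BigOperators ComplexOrder

/-- The inner product ⟨x|y⟩ on ℂ^d. -/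
noncomputable def qinner {d : ℕ} (x y : Fin d → ℂ) : ℂ := star x ⬝ᵥ y

/-- `a` is an orthonormal basis of ℂ^d (d orthonormal vectors). -/
def IsONB {d : ℕ} (a : Fin d → (Fin d → ℂ)) : Prop :=
  ∀ i j, qinner (a i) (a j) = if i = j then 1 else 0

/-- Measurement distribution p_ρ^B(j) = ⟨b_j|ρ|b_j⟩. -/
noncomputable def probB {d : ℕ} (ρ : Matrix (Fin d) (Fin d) ℂ)
    (b : Fin d → (Fin d → ℂ)) (j : Fin d) : ℝ :=
  (qinner (b j) (ρ *ᵥ b j)).re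

/-- Distribution of a B-measurement after a non-selective A-measurement:
q_ρ^{A→B}(j) = Σ_i ⟨a_i|ρ|a_i⟩ |⟨a_i|b_j⟩|². -/
noncomputable def probAB {d : ℕ} (ρ : Matrix (Fin d) (Fin d) ℂ)
    (a b : Fin d → (Fin d → ℂ)) (j : Fin d) : ℝ :=
  ∑ i, probB ρ a i * ‖qinner (a i) (b j)‖ ^ 2

/-- Tsallis entropy of order α. -/
noncomputable def tsallis {d : ℕ} (α : ℝ) (p : Fin d → ℝ) : ℝ :=
  (1 / (1 - α)) * ((∑ j, p j ^ α) - 1)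

/-- Rank-one projector |v⟩⟨v|. -/
noncomputable def proj {d : ℕ} (v : Fin d → ℂ) : Matrix (Fin d) (Fin d) ℂ :=
  vecMulVec v (star v)


/-- The set of values 1 − F(p_ρ^B, q_ρ^{A→B})² over density matrices ρ;
`Q_F(A→B)` is its supremum. -/
noncomputable def QFset {d : ℕ} (a b : Fin d → (Fin d → ℂ)) : Set ℝ :=
  {x | ∃ ρ : Matrix (Fin d) (Fin d) ℂ, ρ.PosSemidef ∧ ρ.trace = 1 ∧
    x = 1 - (∑ j, Real.sqrt (probB ρ b j * probAB ρ a b j)) ^ 2}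

/-!
For ρ = |b_k⟩⟨b_k| the B-distribution is the point mass at k, so the fidelity sum collapses to
its k-th term √(q(k)), and q(k) = Σᵢ |⟨b_k|a_i⟩|² |⟨a_i|b_k⟩|² = Σᵢ |⟨a_i|b_k⟩|⁴. Each of these
values therefore lies in the set whose supremum is Q_F(A→B), and that set is bounded above by 1.
-/

section

variable {d : ℕ}

lemma star_qinner (v x : Fin d → ℂ) : star (qinner v x) = qinner x v := by
  simp [qinner, dotProduct, mul_comm]

lemma norm_qinner_comm (v x : Fin d → ℂ) : ‖qinner v x‖ = ‖qinner x v‖ := by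
  rw [← star_qinner, norm_star]

lemma qinner_proj_mulVec (v x : Fin d → ℂ) :
    qinner x (proj v *ᵥ x) = star (qinner v x) * qinner v x := by
  rw [star_qinner]
  simp only [qinner, proj, dotProduct, mulVec, vecMulVec_apply, Pi.star_apply,
    Finset.mul_sum, Finset.sum_mul]
  rw [Finset.sum_comm]
  exact Finset.sum_congr rfl fun j _ => Finset.sum_congr rfl fun i _ => by ring

lemma posSemidef_proj (v : Fin d → ℂ) : (proj v).PosSemidef := by
  rw [posSemidef_iff_dotProduct_mulVec]
  refine ⟨?_, fun x => ?_⟩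
  · ext i j
    simp [proj, conjTranspose_apply, vecMulVec_apply, mul_comm]
  · change 0 ≤ qinner x (proj v *ᵥ x)
    rw [qinner_proj_mulVec]
    exact star_mul_self_nonneg _

lemma trace_proj (v : Fin d → ℂ) : (proj v).trace = qinner v v := by
  simp [proj, trace, vecMulVec_apply, qinner, dotProduct, mul_comm]

lemma probB_proj (v : Fin d → ℂ) (c : Fin d → Fin d → ℂ) (j : Fin d) :
    probB (proj v) c j = ‖qinner v (c j)‖ ^ 2 := by
  rw [probB, qinner_proj_mulVec, Complex.star_def, Complex.conj_mul', ← Complex.ofReal_pow,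
    Complex.ofReal_re]

lemma probAB_proj_self (a b : Fin d → Fin d → ℂ) (k : Fin d) :
    probAB (proj (b k)) a b k = ∑ i, ‖qinner (a i) (b k)‖ ^ 4 :=
  Finset.sum_congr rfl fun i _ => by rw [probB_proj, norm_qinner_comm]; ring

lemma probB_proj_of_isONB {b : Fin d → Fin d → ℂ} (hb : IsONB b) (k j : Fin d) :
    probB (proj (b k)) b j = if j = k then 1 else 0 := by
  rw [probB_proj, hb k j]
  split_ifs <;> simp_all

lemma sum_sqrt_probB_mul_probAB_proj {b : Fin d → Fin d → ℂ} (hb : IsONB b)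
    (a : Fin d → Fin d → ℂ) (k : Fin d) :
    ∑ j, √(probB (proj (b k)) b j * probAB (proj (b k)) a b j) =
      √(∑ i, ‖qinner (a i) (b k)‖ ^ 4) := by
  rw [Finset.sum_eq_single_of_mem k (Finset.mem_univ k)
    fun j _ hjk => by rw [probB_proj_of_isONB hb, if_neg hjk, zero_mul, Real.sqrt_zero],
    probB_proj_of_isONB hb, if_pos rfl, one_mul, probAB_proj_self]

lemma bddAbove_QFset (a b : Fin d → Fin d → ℂ) : BddAbove (QFset a b) := by
  refine ⟨1, ?_⟩
  rintro x ⟨ρ, -, -, rfl⟩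
  linarith [sq_nonneg (∑ j, √(probB ρ b j * probAB ρ a b j))]

end

theorem QF_ge_max_eigen_general {d : ℕ} (a b : Fin d → (Fin d → ℂ))
    (hb : IsONB b) :
    (∀ k : Fin d,
      1 - (∑ j, Real.sqrt (probB (proj (b k)) b j * probAB (proj (b k)) a b j)) ^ 2
        = 1 - ∑ i, ‖qinner (a i) (b k)‖ ^ 4) ∧
    (⨆ k : Fin d, (1 - ∑ i, ‖qinner (a i) (b k)‖ ^ 4)) ≤ sSup (QFset a b) := by
  have value_eq : ∀ k : Fin d,
      1 - (∑ j, Real.sqrt (probB (proj (b k)) b j * probAB (proj (b k)) a b j)) ^ 2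
        = 1 - ∑ i, ‖qinner (a i) (b k)‖ ^ 4 := fun k => by
    rw [sum_sqrt_probB_mul_probAB_proj hb, Real.sq_sqrt (by positivity)]
  refine ⟨value_eq, ?_⟩
  rcases isEmpty_or_nonempty (Fin d) with hempty | hnonempty
  · -- d = 0: no matrix has trace 1, and both suprema take the junk value 0.
    rw [Real.iSup_of_isEmpty]
    refine Real.sSup_nonneg fun x ⟨ρ, _, htrace, _⟩ => ?_
    simp [trace] at htrace
  · refine ciSup_le fun k => le_csSup (bddAbove_QFset a b)
      ⟨proj (b k), posSemidef_proj (b k), ?_, (value_eq k).symm⟩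
    rw [trace_proj, hb k k, if_pos rfl]

theorem QF_ge_max_eigen {d : ℕ} (hd : 0 < d) (a b : Fin d → (Fin d → ℂ))
    (ha : IsONB a) (hb : IsONB b) :
    (∀ k : Fin d,
      1 - (∑ j, Real.sqrt (probB (proj (b k)) b j * probAB (proj (b k)) a b j)) ^ 2
        = 1 - ∑ i, ‖qinner (a i) (b k)‖ ^ 4) ∧
    (⨆ k : Fin d, (1 - ∑ i, ‖qinner (a i) (b k)‖ ^ 4)) ≤ sSup (QFset a b) :=
  QF_ge_max_eigen_general a b hb
end

section
/- Let d > d_c ≥ 0 be integers and let A = {|a_i⟩} and B = {|b_j⟩} be orthonormal bases of ℂ^d satisfying |⟨a_i|b_j⟩| = δ_{ij} whenever i ≤ d_c or j ≤ d_c, and |⟨a_i|b_j⟩| = 1/√(d−d_c) whenever both i > d_c and j > d_c. Then Q_F(A,B) = (1/2)(1 − 1/(d−d_c)). -/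
open Matrix
open scoped BigOperators ComplexOrder

/-! For `j < dc` the vectors `a j` and `b j` agree up to a phase, so the two measurements give
the same weights there, while the intermediate `A`-measurement spreads the remaining weight
`P = ∑_{j ≥ dc} p j` uniformly over the last `d - dc` outcomes. Hence `q j ≥ p j / (d - dc)` for
every `j`, which forces `F(p, q) ≥ 1 / √(d - dc)`; the pure state `b dc` attains this bound.
The hypotheses are symmetric in `A` and `B`, so `Q_F(B → A)` has the same value. -/

lemma qinner_swap {d : ℕ} (x y : Fin d → ℂ) : qinner y x = star (qinner x y) :=
  star_dotProduct y x

lemma qinner_smul_smul {d : ℕ} (c : ℂ) (x y : Fin d → ℂ) :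
    qinner (c • x) (c • y) = (‖c‖ ^ 2 : ℝ) * qinner x y := by
  simp only [qinner, star_smul, dotProduct_smul, smul_dotProduct, smul_eq_mul, ← mul_assoc,
    RCLike.star_def, Complex.mul_conj']
  push_cast; rfl

lemma IsONB.conjTranspose_mul_self {d : ℕ} {b : Fin d → Fin d → ℂ} (hb : IsONB b) :
    (Matrix.of b)ᴴ * Matrix.of b = 1 := by
  refine mul_eq_one_comm.mp ?_
  ext i j
  simpa [Matrix.mul_apply, Matrix.one_apply, qinner, dotProduct, mul_comm, eq_comm] using hb j i

lemma IsONB.sum_star_mul {d : ℕ} {b : Fin d → Fin d → ℂ} (hb : IsONB b) (k l : Fin d) :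
    ∑ j, star (b j k) * b j l = if k = l then 1 else 0 := by
  simpa [Matrix.mul_apply, Matrix.one_apply] using congrFun (congrFun hb.conjTranspose_mul_self k) l

lemma IsONB.sum_qinner_smul {d : ℕ} {b : Fin d → Fin d → ℂ} (hb : IsONB b) (x : Fin d → ℂ) :
    ∑ k, qinner (b k) x • b k = x := by
  ext l
  simp only [Finset.sum_apply, Pi.smul_apply, smul_eq_mul, qinner, dotProduct, Pi.star_apply,
    Finset.sum_mul]
  rw [Finset.sum_comm]
  have h : ∀ m, ∑ k, star (b k m) * x m * b k l = x m * ∑ k, star (b k m) * b k l := fun m => by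
    rw [Finset.mul_sum]; exact Finset.sum_congr rfl fun _ _ => by ring
  simp only [h, hb.sum_star_mul, mul_ite, mul_one, mul_zero, Finset.sum_ite_eq', Finset.mem_univ,
    if_true]

lemma IsONB.sum_qinner_mulVec {d : ℕ} {b : Fin d → Fin d → ℂ} (hb : IsONB b)
    (ρ : Matrix (Fin d) (Fin d) ℂ) : ∑ j, qinner (b j) (ρ *ᵥ b j) = ρ.trace := by
  simp only [qinner, dotProduct, mulVec, Pi.star_apply, Finset.mul_sum]
  rw [Finset.sum_comm]
  refine Finset.sum_congr rfl fun k _ => ?_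
  rw [Finset.sum_comm]
  simp_rw [mul_left_comm _ (ρ _ _), ← Finset.mul_sum, hb.sum_star_mul]
  simp

lemma IsONB.sum_probB {d : ℕ} {b : Fin d → Fin d → ℂ} (hb : IsONB b)
    {ρ : Matrix (Fin d) (Fin d) ℂ} (hρ : ρ.trace = 1) : ∑ j, probB ρ b j = 1 := by
  simp only [probB, ← Complex.re_sum, hb.sum_qinner_mulVec, hρ, Complex.one_re]

lemma probB_nonneg {d : ℕ} {ρ : Matrix (Fin d) (Fin d) ℂ} (hρ : ρ.PosSemidef)
    (b : Fin d → Fin d → ℂ) (j : Fin d) : 0 ≤ probB ρ b j :=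
  (Complex.le_def.mp (hρ.dotProduct_mulVec_nonneg (b j))).1

lemma probB_eq_of_eq_smul {d : ℕ} (ρ : Matrix (Fin d) (Fin d) ℂ) {a b : Fin d → Fin d → ℂ}
    {i j : Fin d} {c : ℂ} (hc : ‖c‖ = 1) (h : a i = c • b j) : probB ρ a i = probB ρ b j := by
  rw [probB, probB, h, mulVec_smul, qinner_smul_smul, hc]
  simp

lemma probB_vecMulVec_self_star {d : ℕ} (x : Fin d → ℂ) (b : Fin d → Fin d → ℂ) (j : Fin d) :
    probB (vecMulVec x (star x)) b j = ‖qinner (b j) x‖ ^ 2 := by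
  have h : qinner (b j) (vecMulVec x (star x) *ᵥ b j) = qinner (b j) x * qinner x (b j) := by
    simp only [vecMulVec_mulVec, qinner, op_smul_eq_smul, dotProduct_smul, smul_eq_mul]
    ring
  rw [probB, h, qinner_swap (b j) x, RCLike.star_def, Complex.mul_conj']
  norm_cast

lemma sq_le_sq_sum_sqrt_mul {ι : Type*} [Fintype ι] {p q : ι → ℝ} {c : ℝ} (hc : 0 ≤ c)
    (hp : ∀ j, 0 ≤ p j) (hp1 : ∑ j, p j = 1) (hpq : ∀ j, c * p j ≤ q j) :
    c ≤ (∑ j, √(p j * q j)) ^ 2 := by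
  have hterm : ∀ j, √c * p j ≤ √(p j * q j) := fun j => by
    calc √c * p j = √(p j * (c * p j)) := by
          rw [← Real.sqrt_sq (hp j), ← Real.sqrt_mul hc, Real.sqrt_sq (hp j)]; ring_nf
      _ ≤ √(p j * q j) := Real.sqrt_le_sqrt (mul_le_mul_of_nonneg_left (hpq j) (hp j))
  have hsum : √c ≤ ∑ j, √(p j * q j) := by
    calc √c = ∑ j, √c * p j := by rw [← Finset.mul_sum, hp1, mul_one]
      _ ≤ _ := Finset.sum_le_sum fun j _ => hterm j
  calc c = √c ^ 2 := (Real.sq_sqrt hc).symm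
    _ ≤ _ := pow_le_pow_left₀ (Real.sqrt_nonneg c) hsum 2

structure IsPartiallyUnbiased {d : ℕ} (dc : ℕ) (a b : Fin d → Fin d → ℂ) : Prop where
  norm_qinner_of_lt : ∀ i j : Fin d, (i.val < dc ∨ j.val < dc) →
    ‖qinner (a i) (b j)‖ = if i = j then 1 else 0
  norm_qinner_of_le : ∀ i j : Fin d, dc ≤ i.val → dc ≤ j.val →
    ‖qinner (a i) (b j)‖ = 1 / √((d : ℝ) - dc)

namespace IsPartiallyUnbiased

variable {d dc : ℕ} {a b : Fin d → Fin d → ℂ}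

lemma symm (h : IsPartiallyUnbiased dc a b) : IsPartiallyUnbiased dc b a where
  norm_qinner_of_lt i j hij := by
    rw [qinner_swap, norm_star, h.norm_qinner_of_lt j i hij.symm]
    simp only [eq_comm]
  norm_qinner_of_le i j hi hj := by
    rw [qinner_swap, norm_star, h.norm_qinner_of_le j i hj hi]

lemma qinner_eq_zero (h : IsPartiallyUnbiased dc a b) {i j : Fin d} (hij : i.val < dc ∨ j.val < dc)
    (hne : i ≠ j) : qinner (a i) (b j) = 0 := by
  simpa [hne] using h.norm_qinner_of_lt i j hij

lemma eq_smul (h : IsPartiallyUnbiased dc a b) (hb : IsONB b) {j : Fin d} (hj : j.val < dc) :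
    a j = qinner (b j) (a j) • b j := by
  conv_lhs => rw [← hb.sum_qinner_smul (a j)]
  refine Finset.sum_eq_single j (fun k _ hk => ?_) (fun hj => absurd (Finset.mem_univ j) hj)
  rw [qinner_swap, h.qinner_eq_zero (Or.inl hj) (Ne.symm hk), star_zero, zero_smul]

lemma probB_eq (h : IsPartiallyUnbiased dc a b) (hb : IsONB b) (ρ : Matrix (Fin d) (Fin d) ℂ)
    {j : Fin d} (hj : j.val < dc) : probB ρ a j = probB ρ b j := by
  refine probB_eq_of_eq_smul ρ ?_ (h.eq_smul hb hj)
  simpa [qinner_swap (a j)] using h.norm_qinner_of_lt j j (Or.inl hj)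

lemma sum_probB_of_le (h : IsPartiallyUnbiased dc a b) (ha : IsONB a) (hb : IsONB b)
    {ρ : Matrix (Fin d) (Fin d) ℂ} (hρ : ρ.trace = 1) :
    ∑ i with dc ≤ i.val, probB ρ a i = ∑ i with dc ≤ i.val, probB ρ b i := by
  have hsplit : ∀ c : Fin d → Fin d → ℂ, IsONB c →
      ∑ i with dc ≤ i.val, probB ρ c i = 1 - ∑ i with ¬ dc ≤ i.val, probB ρ c i := fun c hc => by
    rw [eq_sub_iff_add_eq, Finset.sum_filter_add_sum_filter_not, hc.sum_probB hρ]
  rw [hsplit a ha, hsplit b hb]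
  congr 1
  exact Finset.sum_congr rfl fun i hi => h.probB_eq hb ρ (by simpa using hi)

lemma probAB_of_lt (h : IsPartiallyUnbiased dc a b) (ρ : Matrix (Fin d) (Fin d) ℂ)
    {j : Fin d} (hj : j.val < dc) : probAB ρ a b j = probB ρ a j := by
  rw [probAB, Finset.sum_eq_single j (fun i _ hij => ?_) (fun h => absurd (Finset.mem_univ j) h)]
  · simp [h.norm_qinner_of_lt j j (Or.inr hj)]
  · simp [h.norm_qinner_of_lt i j (Or.inr hj), hij]

lemma probAB_of_le (h : IsPartiallyUnbiased dc a b) (ρ : Matrix (Fin d) (Fin d) ℂ)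
    {j : Fin d} (hj : dc ≤ j.val) :
    probAB ρ a b j = (∑ i with dc ≤ i.val, probB ρ a i) / ((d : ℝ) - dc) := by
  have hm : 0 ≤ (d : ℝ) - dc := by
    have : dc ≤ d := hj.trans j.isLt.le
    rw [sub_nonneg]; exact_mod_cast this
  rw [probAB, ← Finset.sum_filter_add_sum_filter_not _ (fun i : Fin d => dc ≤ i.val),
    Finset.sum_div]
  have hsmall : ∑ i with ¬ dc ≤ i.val, probB ρ a i * ‖qinner (a i) (b j)‖ ^ 2 = 0 :=
    Finset.sum_eq_zero fun i hi => by
      have hi : i.val < dc := by simpa using hi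
      rw [h.qinner_eq_zero (Or.inl hi) (fun hij => by omega), norm_zero]; ring
  rw [hsmall, add_zero]
  refine Finset.sum_congr rfl fun i hi => ?_
  rw [h.norm_qinner_of_le i j (by simpa using hi) hj, div_pow, Real.sq_sqrt hm]
  ring

lemma probB_le_mul_probAB (h : IsPartiallyUnbiased dc a b) (hdc : dc < d) (ha : IsONB a)
    (hb : IsONB b) {ρ : Matrix (Fin d) (Fin d) ℂ} (hρ : ρ.PosSemidef) (htr : ρ.trace = 1)
    (j : Fin d) : probB ρ b j ≤ ((d : ℝ) - dc) * probAB ρ a b j := by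
  have hm : 1 ≤ (d : ℝ) - dc := by
    have : (dc : ℝ) + 1 ≤ d := by exact_mod_cast hdc
    linarith
  by_cases hj : j.val < dc
  · rw [h.probAB_of_lt ρ hj, h.probB_eq hb ρ hj]
    exact le_mul_of_one_le_left (probB_nonneg hρ b j) hm
  · rw [h.probAB_of_le ρ (not_lt.mp hj), mul_div_cancel₀ _ (by linarith),
      h.sum_probB_of_le ha hb htr]
    exact Finset.single_le_sum (f := probB ρ b) (fun i _ => probB_nonneg hρ b i)
      (by simpa using hj)

lemma le_of_mem_QFset (h : IsPartiallyUnbiased dc a b) (hdc : dc < d) (ha : IsONB a)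
    (hb : IsONB b) : ∀ x ∈ QFset a b, x ≤ 1 - 1 / ((d : ℝ) - dc) := by
  rintro x ⟨ρ, hρ, htr, rfl⟩
  have hm : 0 < (d : ℝ) - dc := by
    rw [sub_pos]; exact_mod_cast hdc
  have hF := sq_le_sq_sum_sqrt_mul (q := probAB ρ a b) (one_div_nonneg.mpr hm.le)
    (probB_nonneg hρ b) (hb.sum_probB htr) fun j => by
      rw [one_div_mul_eq_div, div_le_iff₀ hm, mul_comm]
      exact h.probB_le_mul_probAB hdc ha hb hρ htr j
  linarith

lemma mem_QFset (h : IsPartiallyUnbiased dc a b) (hdc : dc < d) (ha : IsONB a) (hb : IsONB b) :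
    1 - 1 / ((d : ℝ) - dc) ∈ QFset a b := by
  set j₀ : Fin d := ⟨dc, hdc⟩
  set ρ := vecMulVec (b j₀) (star (b j₀))
  have htr : ρ.trace = 1 := by
    simpa [ρ, trace_vecMulVec, dotProduct_comm, qinner] using hb j₀ j₀
  have hp : ∀ j, probB ρ b j = if j = j₀ then 1 else 0 := fun j => by
    rw [probB_vecMulVec_self_star, hb j j₀]
    split_ifs <;> simp
  have hq : probAB ρ a b j₀ = 1 / ((d : ℝ) - dc) := by
    rw [h.probAB_of_le ρ le_rfl, h.sum_probB_of_le ha hb htr]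
    simp [hp, j₀]
  refine ⟨ρ, posSemidef_vecMulVec_self_star _, htr, ?_⟩
  have hm : 0 ≤ (d : ℝ) - dc := sub_nonneg.mpr (by exact_mod_cast hdc.le)
  rw [Finset.sum_eq_single j₀ (fun j _ hj => by simp [hp, hj])
      (fun h => absurd (Finset.mem_univ _) h),
    hp, if_pos rfl, one_mul, hq, Real.sq_sqrt (one_div_nonneg.mpr hm)]

lemma sSup_QFset (h : IsPartiallyUnbiased dc a b) (hdc : dc < d) (ha : IsONB a) (hb : IsONB b) :
    sSup (QFset a b) = 1 - 1 / ((d : ℝ) - dc) :=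
  IsGreatest.csSup_eq ⟨h.mem_QFset hdc ha hb, h.le_of_mem_QFset hdc ha hb⟩

end IsPartiallyUnbiased

theorem QF_commuting_subspace {d dc : ℕ} (hdc : dc < d) (a b : Fin d → (Fin d → ℂ))
    (ha : IsONB a) (hb : IsONB b)
    (hcomm : ∀ i j : Fin d, (i.val < dc ∨ j.val < dc) →
      ‖qinner (a i) (b j)‖ = if i = j then 1 else 0)
    (hmub : ∀ i j : Fin d, dc ≤ i.val → dc ≤ j.val →
      ‖qinner (a i) (b j)‖ = 1 / Real.sqrt ((d : ℝ) - dc)) :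
    (1 / 4) * (sSup (QFset a b) + sSup (QFset b a))
      = (1 / 2) * (1 - 1 / ((d : ℝ) - dc)) := by
  have h : IsPartiallyUnbiased dc a b := ⟨hcomm, hmub⟩
  rw [h.sSup_QFset hdc ha hb, h.symm.sSup_QFset hdc hb ha]
  ring
end
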